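/- Let θ̂ solve the dual lasso problem and suppose R ⊆ R^n is a compact set with θ̂ ∈ R. If a feature b_i satisfies max_{θ ∈ R} |θ^T b_i| < 1, then for every solution ŵ of the lasso problem min_w (1/2)‖y − Bw‖₂² + λ‖w‖₁, the i-th coordinate ŵ_i = 0. -/

import Mathlib

/-!
Optimality of `ŵ` along each coordinate direction gives the KKT conditions: with
`θ := λ⁻¹ (y - Bŵ)` one has `|θᵀbⱼ| ≤ 1` and `θᵀbⱼ ŵⱼ = |ŵⱼ|` for all `j`. Hence `θ` is dual
feasible and satisfies the variational inequality characterising the projection of `y/λ` onto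
the dual feasible set, so `θ = θ̂`. As `θ̂ ∈ R`, `|θ̂ᵀbᵢ| < 1`, which is incompatible with
`θ̂ᵀbᵢ ŵᵢ = |ŵᵢ|` unless `ŵᵢ = 0`.
-/

open Filter Topology
open scoped RealInnerProductSpace

lemma le_of_forall_mem_Ioo_le_add_mul {x y z : ℝ}
    (h : ∀ s ∈ Set.Ioo (0 : ℝ) 1, x ≤ y + s * z) : x ≤ y := by
  have hlim : Tendsto (fun s : ℝ => y + s * z) (𝓝[>] 0) (𝓝 y) := by
    have : Continuous fun s : ℝ => y + s * z := by fun_prop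
    simpa using (this.tendsto 0).mono_left nhdsWithin_le_nhds
  exact ge_of_tendsto hlim (eventually_of_mem (Ioo_mem_nhdsGT one_pos) h)

lemma abs_le_and_mul_eq_of_forall_le {a c C lam : ℝ} (hlam : 0 ≤ lam)
    (h : ∀ t, lam * |a| ≤ -(t * c) + t ^ 2 * C / 2 + lam * |a + t|) :
    |c| ≤ lam ∧ c * a = lam * |a| := by
  have hc : c ^ 2 ≤ lam * |c| := by
    refine le_of_forall_mem_Ioo_le_add_mul (z := c ^ 2 * C / 2) fun s ⟨hs, _⟩ => ?_
    have hstep : |a + s * c| ≤ |a| + s * |c| := by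
      simpa [abs_mul, abs_of_pos hs] using abs_add_le a (s * c)
    have := h (s * c)
    refine le_of_mul_le_mul_left ?_ hs
    nlinarith
  have hac : lam * |a| ≤ c * a := by
    refine le_of_forall_mem_Ioo_le_add_mul (z := a ^ 2 * C / 2) fun s ⟨hs, hs1⟩ => ?_
    have hstep : |a + -(s * a)| = (1 - s) * |a| := by
      rw [show a + -(s * a) = (1 - s) * a by ring, abs_mul, abs_of_pos (by linarith)]
    have := h (-(s * a))
    rw [hstep] at this
    refine le_of_mul_le_mul_left ?_ hs
    nlinarith
  have hc' : |c| ≤ lam := by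
    rcases (abs_nonneg c).eq_or_lt with h0 | hpos
    · rw [← h0]; exact hlam
    · nlinarith [sq_abs c]
  refine ⟨hc', le_antisymm ?_ hac⟩
  calc c * a ≤ |c| * |a| := by rw [← abs_mul]; exact le_abs_self _
    _ ≤ lam * |a| := mul_le_mul_of_nonneg_right hc' (abs_nonneg a)

lemma eq_zero_of_mul_eq_abs_of_abs_lt_one {a c : ℝ} (h : c * a = |a|) (hc : |c| < 1) :
    a = 0 := by
  have habs : |c| * |a| = |a| := by rw [← abs_mul, h, abs_abs]
  exact abs_eq_zero.mp (by nlinarith [abs_nonneg a])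

section InnerProductSpace

variable {E : Type*} [NormedAddCommGroup E] [InnerProductSpace ℝ E]

lemma eq_of_inner_sub_nonpos_of_norm_sub_le {u x z : E} (hvi : ⟪u - x, z - x⟫ ≤ 0)
    (hle : ‖z - u‖ ≤ ‖x - u‖) : z = x := by
  have hexpand : ‖z - u‖ ^ 2 = ‖z - x‖ ^ 2 - 2 * ⟪u - x, z - x⟫ + ‖x - u‖ ^ 2 := by
    rw [show z - u = (z - x) - (u - x) by abel, norm_sub_sq_real, real_inner_comm,
      norm_sub_rev u x]
  have hsq : ‖z - u‖ ^ 2 ≤ ‖x - u‖ ^ 2 := pow_le_pow_left₀ (norm_nonneg _) hle 2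
  have : ‖z - x‖ ^ 2 ≤ 0 := by linarith
  rw [← sub_eq_zero, ← norm_eq_zero]
  exact pow_eq_zero_iff two_ne_zero |>.mp (le_antisymm this (sq_nonneg _))

variable {ι : Type*} [Fintype ι] (b : ι → E) (y : E) (lam : ℝ)

noncomputable def lassoObjective (w : ι → ℝ) : ℝ :=
  (1 / 2) * ‖y - ∑ i, w i • b i‖ ^ 2 + lam * ∑ i, |w i|

/-- The dual point `θ` determined by `y = B w + λ θ`. -/
noncomputable def dualOfPrimal (w : ι → ℝ) : E :=
  lam⁻¹ • (y - ∑ i, w i • b i)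

variable {b y lam}

lemma lassoObjective_add_single [DecidableEq ι] (w : ι → ℝ) (j : ι) (t : ℝ) :
    lassoObjective b y lam (w + Pi.single j t) = lassoObjective b y lam w
      - t * ⟪y - ∑ i, w i • b i, b j⟫ + t ^ 2 * ‖b j‖ ^ 2 / 2 + lam * (|w j + t| - |w j|) := by
  have hsum : ∑ i, ((w + Pi.single j t : ι → ℝ) i) • b i = ∑ i, w i • b i + t • b j := by
    simp [add_smul, Finset.sum_add_distrib, Pi.single_apply, ite_smul]
  have habs : ∑ i, |((w + Pi.single j t : ι → ℝ) i)| = ∑ i, |w i| + (|w j + t| - |w j|) := by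
    rw [← sub_eq_iff_eq_add', ← Finset.sum_sub_distrib,
      Fintype.sum_eq_single j fun i hi => by simp [hi]]
    simp
  rw [lassoObjective, lassoObjective, hsum, habs, ← sub_sub, norm_sub_sq_real,
    real_inner_smul_right, norm_smul, mul_pow, Real.norm_eq_abs, sq_abs]
  ring

theorem abs_inner_dualOfPrimal_le_and_mul_eq (hlam : 0 < lam) {w : ι → ℝ}
    (hmin : ∀ v, lassoObjective b y lam w ≤ lassoObjective b y lam v) (j : ι) :
    |⟪dualOfPrimal b y lam w, b j⟫| ≤ 1 ∧ ⟪dualOfPrimal b y lam w, b j⟫ * w j = |w j| := by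
  classical
  set c := ⟪y - ∑ i, w i • b i, b j⟫
  obtain ⟨hle, heq⟩ := abs_le_and_mul_eq_of_forall_le (a := w j) (c := c) (C := ‖b j‖ ^ 2) hlam.le
    fun t => by
      have := hmin (w + Pi.single j t)
      rw [lassoObjective_add_single] at this
      linarith
  have hinner : ⟪dualOfPrimal b y lam w, b j⟫ = lam⁻¹ * c := real_inner_smul_left _ _ _
  rw [hinner, abs_mul, abs_inv, abs_of_pos hlam, inv_mul_le_one₀ hlam, mul_assoc, heq,
    inv_mul_cancel_left₀ hlam.ne']
  exact ⟨hle, rfl⟩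

lemma inner_sum_smul_le_sum_abs {θ : E} (hθ : ∀ j, |⟪θ, b j⟫| ≤ 1) (w : ι → ℝ) :
    ⟪∑ j, w j • b j, θ⟫ ≤ ∑ j, |w j| := by
  rw [sum_inner]
  gcongr with j
  rw [real_inner_smul_left, real_inner_comm]
  calc w j * ⟪θ, b j⟫ ≤ |w j| * |⟪θ, b j⟫| := by rw [← abs_mul]; exact le_abs_self _
    _ ≤ |w j| := mul_le_of_le_one_right (abs_nonneg _) (hθ j)

lemma inner_sum_smul_eq_sum_abs {θ : E} {w : ι → ℝ} (h : ∀ j, ⟪θ, b j⟫ * w j = |w j|) :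
    ⟪∑ j, w j • b j, θ⟫ = ∑ j, |w j| := by
  rw [sum_inner]
  exact Finset.sum_congr rfl fun j _ => by rw [real_inner_smul_left, real_inner_comm, mul_comm, h]

lemma inner_sub_dualOfPrimal_nonpos (hlam : 0 ≤ lam) {w : ι → ℝ}
    (hcompl : ∀ j, ⟪dualOfPrimal b y lam w, b j⟫ * w j = |w j|) {θ : E}
    (hθ : ∀ j, |⟪θ, b j⟫| ≤ 1) :
    ⟪lam⁻¹ • y - dualOfPrimal b y lam w, θ - dualOfPrimal b y lam w⟫ ≤ 0 := by
  have hres : lam⁻¹ • y - dualOfPrimal b y lam w = lam⁻¹ • ∑ i, w i • b i := by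
    rw [dualOfPrimal, ← smul_sub, sub_sub_cancel]
  rw [hres, real_inner_smul_left, inner_sub_right, inner_sum_smul_eq_sum_abs hcompl]
  exact mul_nonpos_of_nonneg_of_nonpos (inv_nonneg.mpr hlam)
    (sub_nonpos.mpr (inner_sum_smul_le_sum_abs hθ w))

end InnerProductSpace

theorem stmt12 (d p : ℕ)
    (b : Fin p → EuclideanSpace ℝ (Fin d)) (y : EuclideanSpace ℝ (Fin d))
    (lam : ℝ) (hlam : 0 < lam)
    (f : (Fin p → ℝ) → ℝ)
    (hf : ∀ w, f w = (1/2) * ‖y - ∑ i, w i • b i‖ ^ 2 + lam * ∑ i, |w i|)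
    (θh : EuclideanSpace ℝ (Fin d))
    (hθfeas : ∀ j, |(inner ℝ θh (b j) : ℝ)| ≤ 1)
    (hθproj : ∀ θ : EuclideanSpace ℝ (Fin d), (∀ j, |(inner ℝ θ (b j) : ℝ)| ≤ 1) →
      ‖θh - lam⁻¹ • y‖ ≤ ‖θ - lam⁻¹ • y‖)
    (R : Set (EuclideanSpace ℝ (Fin d))) (hR : IsCompact R) (hθR : θh ∈ R)
    (i : Fin p)
    (hrej : sSup ((fun θ => |(inner ℝ θ (b i) : ℝ)|) '' R) < 1) :
    ∀ wh : Fin p → ℝ, (∀ w, f wh ≤ f w) → wh i = 0 := by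
  intro wh hopt
  obtain rfl : f = lassoObjective b y lam := funext hf
  have hkkt := abs_inner_dualOfPrimal_le_and_mul_eq hlam hopt
  have hθ : θh = dualOfPrimal b y lam wh :=
    eq_of_inner_sub_nonpos_of_norm_sub_le
      (inner_sub_dualOfPrimal_nonpos hlam.le (fun j => (hkkt j).2) hθfeas)
      (hθproj _ fun j => (hkkt j).1)
  have hcont : Continuous fun θ : EuclideanSpace ℝ (Fin d) => |⟪θ, b i⟫| := by fun_prop
  have hlt : |⟪θh, b i⟫| < 1 :=
    (le_csSup (hR.image hcont).bddAbove (Set.mem_image_of_mem _ hθR)).trans_lt hrej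
  exact eq_zero_of_mul_eq_abs_of_abs_lt_one (hkkt i).2 (hθ ▸ hlt)
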